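/- In the free associative k-algebra on symbols δ_0, ..., δ_{N-1}, the leading term (with respect to the degree-lexicographic order induced by δ_0 > δ_1 > ... > δ_{N-1}) of the element S_l = Σ_{i+j=l} (-1)^i δ_i δ_j is δ_0 δ_l when 0 ≤ l ≤ N-1, and δ_{l-N+1} δ_{N-1} when N-1 < l ≤ 2(N-1). -/
import Mathlib


/-- In the free associative algebra on `δ_0, …, δ_{N-1}`, order degree-2 monomials
`δ_i δ_j` by the degree-lexicographic order induced by `δ_0 > δ_1 > ⋯ > δ_{N-1}`; so the
monomial `δ_i δ_j` is larger than `δ_{i'} δ_{j'}` iff `i < i'`, or `i = i'` and `j < j'`.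
The leading term of `S_l = Σ_{i+j=l} (-1)^i δ_i δ_j` (whose monomials are exactly the
`δ_i δ_j` with `i + j = l`, `0 ≤ i, j ≤ N-1`) is `δ_0 δ_l` when `0 ≤ l ≤ N-1`, and
`δ_{l-N+1} δ_{N-1}` when `N-1 < l ≤ 2(N-1)`: the indicated pair occurs among the monomials
of `S_l` and dominates every pair `(i,j)` occurring in `S_l`. -/
theorem stmt_3 (N l : ℕ) (hN : 2 ≤ N) (hl : l ≤ 2 * (N - 1)) :
    ∀ lt : ℕ × ℕ, lt = (if l ≤ N - 1 then ((0 : ℕ), l) else (l - (N - 1), N - 1)) →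
      (lt.1 + lt.2 = l ∧ lt.1 ≤ N - 1 ∧ lt.2 ≤ N - 1) ∧
      (∀ i j : ℕ, i + j = l → i ≤ N - 1 → j ≤ N - 1 →
        (lt.1 < i ∨ (lt.1 = i ∧ lt.2 ≤ j))) := by
  intro lt hlt
  subst hlt
  split <;> constructor
  · refine ⟨by simp, by omega, by omega⟩
  · intro i j h1 h2 h3; simp; omega
  · refine ⟨by simp; omega, by simp; omega, by simp⟩
  · intro i j h1 h2 h3; simp; omega
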